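/- The language {aⁿbⁿcⁿ : n ≥ 0} over the alphabet {a,b,c} is accepted by an nrDFAwtl. -/

import Mathlib

/-- The end-of-tape behaviour of a non-returning automaton with translucent
letters: either a set of states to continue with (the empty set meaning that
the transition is undefined), or the operation `Accept`. -/
inductive EndMove (Q : Type) where
  | cont : Set Q → EndMove Q
  | accept : EndMove Q

/-- A nondeterministic finite automaton with translucent letters (NFAwtl).
`τ q` is the set of letters that are translucent for state `q`. -/
structure NFAwtl (Q : Type) (A : Type) where
  τ : Q → Set A
  I : Set Q
  F : Set Q
  δ : Q → A → Set Q
  tr_compat : ∀ q a, a ∈ τ q → δ q a = ∅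

namespace NFAwtl

variable {Q A : Type}

/-- A single computation step of an NFAwtl: the first letter (from the left)
that is not translucent for the current state is read and deleted. -/
inductive Step (M : NFAwtl Q A) : Q × List A → Q × List A → Prop
  | read (q q' : Q) (u v : List A) (a : A) :
      (∀ b ∈ u, b ∈ M.τ q) → a ∉ M.τ q → q' ∈ M.δ q a →
      Step M (q, u ++ a :: v) (q', u ++ v)

/-- The language accepted by an NFAwtl: words from which some computation
reaches a configuration whose remaining tape contents is translucent for a
final state. -/
def lang (M : NFAwtl Q A) : Set (List A) :=
  { w | ∃ q₀ ∈ M.I, ∃ q w', Relation.ReflTransGen (Step M) (q₀, w) (q, w') ∧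
        (∀ b ∈ w', b ∈ M.τ q) ∧ q ∈ M.F }

/-- An NFAwtl is deterministic (a DFAwtl) if it has a single initial state and
at most one transition for each state/letter pair. -/
def IsDet (M : NFAwtl Q A) : Prop :=
  (∃ q, M.I = {q}) ∧ ∀ q a, (M.δ q a).Subsingleton

end NFAwtl

/-- A configuration of a non-returning automaton with translucent letters:
`conf x q w` means the tape contains `x ++ w` followed by the end-of-tape
marker, the current state is `q`, and the head is positioned at the first
letter of `w`; `accept` is the accepting halting configuration. -/
inductive NrConf (Q : Type) (A : Type) where
  | conf : List A → Q → List A → NrConf Q A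
  | accept : NrConf Q A

/-- A non-returning nondeterministic finite automaton with translucent
letters (nrNFAwtl). -/
structure NrNFAwtl (Q : Type) (A : Type) where
  τ : Q → Set A
  I : Set Q
  δ : Q → A → Set Q
  δend : Q → EndMove Q
  tr_compat : ∀ q a, a ∈ τ q → δ q a = ∅

namespace NrNFAwtl

variable {Q A : Type}

/-- A single computation step of an nrNFAwtl. -/
inductive Step (M : NrNFAwtl Q A) : NrConf Q A → NrConf Q A → Prop
  | read (x : List A) (q q' : Q) (u v : List A) (a : A) :
      (∀ b ∈ u, b ∈ M.τ q) → a ∉ M.τ q → q' ∈ M.δ q a →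
      Step M (.conf x q (u ++ a :: v)) (.conf (x ++ u) q' v)
  | restart (x w : List A) (q q' : Q) (S : Set Q) :
      (∀ b ∈ w, b ∈ M.τ q) → M.δend q = .cont S → q' ∈ S →
      Step M (.conf x q w) (.conf [] q' (x ++ w))
  | accept (x w : List A) (q : Q) :
      (∀ b ∈ w, b ∈ M.τ q) → M.δend q = .accept →
      Step M (.conf x q w) .accept

/-- The language accepted by an nrNFAwtl. -/
def lang (M : NrNFAwtl Q A) : Set (List A) :=
  { w | ∃ q₀ ∈ M.I, Relation.ReflTransGen (Step M) (.conf [] q₀ w) .accept }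

/-- An nrNFAwtl is deterministic (an nrDFAwtl) if it has a single initial
state and, for every state and every letter (including the end-of-tape
marker), at most one transition is available. -/
def IsDet (M : NrNFAwtl Q A) : Prop :=
  (∃ q, M.I = {q}) ∧ (∀ q a, (M.δ q a).Subsingleton) ∧
  (∀ q S, M.δend q = .cont S → S.Subsingleton)

end NrNFAwtl

/-- `L` is accepted by some NFAwtl. -/
def AcceptedByNFAwtl {A : Type} [Fintype A] (L : Set (List A)) : Prop :=
  ∃ (Q : Type) (_ : Fintype Q) (M : NFAwtl Q A), M.lang = L

/-- `L` is accepted by some DFAwtl. -/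
def AcceptedByDFAwtl {A : Type} [Fintype A] (L : Set (List A)) : Prop :=
  ∃ (Q : Type) (_ : Fintype Q) (M : NFAwtl Q A), M.IsDet ∧ M.lang = L

/-- `L` is accepted by some nrNFAwtl. -/
def AcceptedByNrNFAwtl {A : Type} [Fintype A] (L : Set (List A)) : Prop :=
  ∃ (Q : Type) (_ : Fintype Q) (M : NrNFAwtl Q A), M.lang = L

/-- `L` is accepted by some nrDFAwtl. -/
def AcceptedByNrDFAwtl {A : Type} [Fintype A] (L : Set (List A)) : Prop :=
  ∃ (Q : Type) (_ : Fintype Q) (M : NrNFAwtl Q A), M.IsDet ∧ M.lang = L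

/-- The three-letter alphabet `{a, b, c}`. -/
inductive Γ3 : Type
  | a | b | c
deriving DecidableEq

instance : Fintype Γ3 :=
  ⟨{Γ3.a, Γ3.b, Γ3.c}, fun x => by cases x <;> simp⟩

/-- The language `{aⁿbⁿcⁿ : n ≥ 0}`. -/
def Labc : Set (List Γ3) :=
  { w | ∃ n : ℕ, w = List.replicate n Γ3.a ++ List.replicate n Γ3.b ++ List.replicate n Γ3.c }


/-! ### Auxiliary construction -/

/-- States of the nrDFAwtl for `{aⁿbⁿcⁿ}`. -/
inductive StABC : Type
  | q0 | qb | qc | qr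
deriving DecidableEq

instance : Fintype StABC :=
  ⟨{StABC.q0, StABC.qb, StABC.qc, StABC.qr}, fun x => by cases x <;> simp⟩

/-- The nrDFAwtl accepting `{aⁿbⁿcⁿ}`: in each round it reads one `a`, one
`b` (with `a` translucent), one `c` (with `b` translucent), and restarts when
the rest of the tape consists of `c`s only; it accepts on the empty tape. -/
def Mabc : NrNFAwtl StABC Γ3 where
  τ q := match q with
    | .q0 => ∅
    | .qb => {Γ3.a}
    | .qc => {Γ3.b}
    | .qr => {Γ3.c}
  I := {.q0}
  δ q x := match q, x with
    | .q0, .a => {.qb}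
    | .qb, .b => {.qc}
    | .qc, .c => {.qr}
    | _, _ => ∅
  δend q := match q with
    | .q0 => .accept
    | .qb => .cont ∅
    | .qc => .cont ∅
    | .qr => .cont {.q0}
  tr_compat := by intro q x h; cases q <;> cases x <;> simp_all [Set.mem_singleton_iff]

lemma inv_q0 {x w : List Γ3} {cf : NrConf StABC Γ3}
    (h : Mabc.Step (.conf x .q0 w) cf) :
    (w = [] ∧ cf = .accept) ∨ ∃ w', w = Γ3.a :: w' ∧ cf = .conf x .qb w' := by
  cases h with
  | read _ _ q' u v a hu hna hq =>
      have hu0 : u = [] := by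
        cases u with
        | nil => rfl
        | cons b t => exact absurd (hu b (by simp)) (by simp [Mabc])
      subst hu0
      cases a with
      | a =>
          have : q' = .qb := by simpa [Mabc] using hq
          subst this
          exact Or.inr ⟨v, by simp, by simp⟩
      | b => exact absurd hq (by simp [Mabc])
      | c => exact absurd hq (by simp [Mabc])
  | restart _ w _ q' S hw hS hq =>
      exact absurd hS (by simp [Mabc])
  | accept _ w _ hw hend =>
      refine Or.inl ⟨?_, rfl⟩
      cases w with
      | nil => rfl
      | cons b t => exact absurd (hw b (by simp)) (by simp [Mabc])

lemma inv_qb {x w : List Γ3} {cf : NrConf StABC Γ3}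
    (h : Mabc.Step (.conf x .qb w) cf) :
    ∃ i v, w = List.replicate i Γ3.a ++ Γ3.b :: v ∧
      cf = .conf (x ++ List.replicate i Γ3.a) .qc v := by
  cases h with
  | read _ _ q' u v a hu hna hq =>
      have hu0 : u = List.replicate u.length Γ3.a :=
        List.eq_replicate_of_mem (fun b hb => by
          have := hu b hb; simpa [Mabc] using this)
      cases a with
      | a => exact absurd (by simp [Mabc]) hna
      | b =>
          have : q' = .qc := by simpa [Mabc] using hq
          subst this
          exact ⟨u.length, v, by rw [← hu0], by rw [← hu0]⟩
      | c => exact absurd hq (by simp [Mabc])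
  | restart _ w _ q' S hw hS hq =>
      have : S = ∅ := by
        have : Mabc.δend .qb = .cont ∅ := rfl
        rw [this] at hS; injection hS with h'; exact h'.symm
      subst this
      exact absurd hq (by simp)
  | accept _ w _ hw hend => exact absurd hend (by simp [Mabc])

lemma inv_qc {x w : List Γ3} {cf : NrConf StABC Γ3}
    (h : Mabc.Step (.conf x .qc w) cf) :
    ∃ j v, w = List.replicate j Γ3.b ++ Γ3.c :: v ∧
      cf = .conf (x ++ List.replicate j Γ3.b) .qr v := by
  cases h with
  | read _ _ q' u v a hu hna hq =>
      have hu0 : u = List.replicate u.length Γ3.b :=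
        List.eq_replicate_of_mem (fun b hb => by
          have := hu b hb; simpa [Mabc] using this)
      cases a with
      | a => exact absurd hq (by simp [Mabc])
      | b => exact absurd (by simp [Mabc]) hna
      | c =>
          have : q' = .qr := by simpa [Mabc] using hq
          subst this
          exact ⟨u.length, v, by rw [← hu0], by rw [← hu0]⟩
  | restart _ w _ q' S hw hS hq =>
      have : S = ∅ := by
        have : Mabc.δend .qc = .cont ∅ := rfl
        rw [this] at hS; injection hS with h'; exact h'.symm
      subst this
      exact absurd hq (by simp)
  | accept _ w _ hw hend => exact absurd hend (by simp [Mabc])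

lemma inv_qr {x w : List Γ3} {cf : NrConf StABC Γ3}
    (h : Mabc.Step (.conf x .qr w) cf) :
    (∃ k, w = List.replicate k Γ3.c) ∧ cf = .conf [] .q0 (x ++ w) := by
  cases h with
  | read _ _ q' u v a hu hna hq =>
      exact absurd hq (by cases a <;> simp [Mabc])
  | restart _ w _ q' S hw hS hq =>
      have hS' : S = {StABC.q0} := by
        have : Mabc.δend .qr = .cont {StABC.q0} := rfl
        rw [this] at hS; injection hS with h'; exact h'.symm
      subst hS'
      have : q' = .q0 := by simpa using hq
      subst this
      refine ⟨⟨w.length, List.eq_replicate_of_mem (fun b hb => by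
        have := hw b hb; simpa [Mabc] using this)⟩, rfl⟩
  | accept _ w _ hw hend => exact absurd hend (by simp [Mabc])

lemma Mabc_sound : ∀ n (w : List Γ3), w.length ≤ n →
    Relation.ReflTransGen Mabc.Step (.conf [] .q0 w) .accept → w ∈ Labc := by
  intro n
  induction n with
  | zero =>
      intro w hl _
      have : w = [] := List.length_eq_zero_iff.mp (Nat.le_zero.mp hl)
      exact ⟨0, by simp [this]⟩
  | succ n ih =>
      intro w hl h
      rcases Relation.ReflTransGen.cases_head h with heq | ⟨c1, hs1, h1⟩
      · exact (nomatch heq)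
      rcases inv_q0 hs1 with ⟨hw, rfl⟩ | ⟨w', rfl, rfl⟩
      · exact ⟨0, by simp [hw]⟩
      rcases Relation.ReflTransGen.cases_head h1 with heq | ⟨c2, hs2, h2⟩
      · exact (nomatch heq)
      rcases inv_qb hs2 with ⟨i, v, rfl, rfl⟩
      rcases Relation.ReflTransGen.cases_head h2 with heq | ⟨c3, hs3, h3⟩
      · exact (nomatch heq)
      rcases inv_qc hs3 with ⟨j, v2, rfl, rfl⟩
      rcases Relation.ReflTransGen.cases_head h3 with heq | ⟨c4, hs4, h4⟩
      · exact (nomatch heq)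
      obtain ⟨⟨k, rfl⟩, rfl⟩ := inv_qr hs4
      have hlen : ((([] ++ List.replicate i Γ3.a) ++ List.replicate j Γ3.b) ++
          List.replicate k Γ3.c).length ≤ n := by
        simp at hl ⊢; omega
      obtain ⟨m, hm⟩ := ih _ hlen h4
      simp only [List.nil_append, List.append_assoc] at hm
      have hi : i = m := by
        have := congrArg (List.count Γ3.a) hm
        simpa [List.count_append, List.count_replicate] using this
      have hj : j = m := by
        have := congrArg (List.count Γ3.b) hm
        simpa [List.count_append, List.count_replicate] using this
      have hk : k = m := by
        have := congrArg (List.count Γ3.c) hm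
        simpa [List.count_append, List.count_replicate] using this
      refine ⟨m + 1, ?_⟩
      rw [hi, hj, hk]
      simp [List.replicate_succ, List.append_assoc]

lemma Mabc_complete : ∀ n : ℕ, Relation.ReflTransGen Mabc.Step
    (.conf [] .q0 (List.replicate n Γ3.a ++ List.replicate n Γ3.b ++
      List.replicate n Γ3.c)) .accept := by
  intro n
  induction n with
  | zero =>
      simpa using Relation.ReflTransGen.single
        (NrNFAwtl.Step.accept (M := Mabc) [] [] .q0 (by simp) rfl)
  | succ n ih =>
      have h1 : Mabc.Step
          (.conf [] .q0 (List.replicate (n+1) Γ3.a ++ List.replicate (n+1) Γ3.b ++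
            List.replicate (n+1) Γ3.c))
          (.conf [] .qb (List.replicate n Γ3.a ++ List.replicate (n+1) Γ3.b ++
            List.replicate (n+1) Γ3.c)) := by
        have := NrNFAwtl.Step.read (M := Mabc) [] .q0 .qb []
          (List.replicate n Γ3.a ++ List.replicate (n+1) Γ3.b ++
            List.replicate (n+1) Γ3.c) Γ3.a (by simp) (by simp [Mabc]) (by simp [Mabc])
        simpa [List.replicate_succ, List.append_assoc] using this
      have h2 : Mabc.Step
          (.conf [] .qb (List.replicate n Γ3.a ++ List.replicate (n+1) Γ3.b ++
            List.replicate (n+1) Γ3.c))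
          (.conf (List.replicate n Γ3.a) .qc (List.replicate n Γ3.b ++
            List.replicate (n+1) Γ3.c)) := by
        have := NrNFAwtl.Step.read (M := Mabc) [] .qb .qc (List.replicate n Γ3.a)
          (List.replicate n Γ3.b ++ List.replicate (n+1) Γ3.c) Γ3.b
          (by intro b hb; simp [Mabc, List.eq_of_mem_replicate hb])
          (by simp [Mabc]) (by simp [Mabc])
        simpa [List.replicate_succ, List.append_assoc] using this
      have h3 : Mabc.Step
          (.conf (List.replicate n Γ3.a) .qc (List.replicate n Γ3.b ++
            List.replicate (n+1) Γ3.c))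
          (.conf (List.replicate n Γ3.a ++ List.replicate n Γ3.b) .qr
            (List.replicate n Γ3.c)) := by
        have := NrNFAwtl.Step.read (M := Mabc) (List.replicate n Γ3.a) .qc .qr
          (List.replicate n Γ3.b) (List.replicate n Γ3.c) Γ3.c
          (by intro b hb; simp [Mabc, List.eq_of_mem_replicate hb])
          (by simp [Mabc]) (by simp [Mabc])
        simpa [List.replicate_succ, List.append_assoc] using this
      have h4 : Mabc.Step
          (.conf (List.replicate n Γ3.a ++ List.replicate n Γ3.b) .qr
            (List.replicate n Γ3.c))
          (.conf [] .q0 (List.replicate n Γ3.a ++ List.replicate n Γ3.b ++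
            List.replicate n Γ3.c)) := by
        have := NrNFAwtl.Step.restart (M := Mabc)
          (List.replicate n Γ3.a ++ List.replicate n Γ3.b)
          (List.replicate n Γ3.c) .qr .q0 {StABC.q0}
          (by intro b hb; simp [Mabc, List.eq_of_mem_replicate hb]) rfl (by simp)
        simpa [List.append_assoc] using this
      exact .head h1 (.head h2 (.head h3 (.head h4 ih)))

/-- The language `{aⁿbⁿcⁿ : n ≥ 0}` is accepted by an
nrDFAwtl. -/
theorem Labc_accepted_by_nrDFAwtl : AcceptedByNrDFAwtl Labc := by
  refine ⟨StABC, inferInstance, Mabc, ⟨⟨.q0, rfl⟩, ?_, ?_⟩, ?_⟩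
  · intro q a
    cases q <;> cases a <;>
      first
        | exact Set.subsingleton_empty
        | exact Set.subsingleton_singleton
  · intro q S h
    cases q with
    | q0 => exact absurd h (by simp [Mabc])
    | qb =>
        have : Mabc.δend .qb = .cont ∅ := rfl
        rw [this] at h; injection h with h'; rw [← h']
        exact Set.subsingleton_empty
    | qc =>
        have : Mabc.δend .qc = .cont ∅ := rfl
        rw [this] at h; injection h with h'; rw [← h']
        exact Set.subsingleton_empty
    | qr =>
        have : Mabc.δend .qr = .cont {StABC.q0} := rfl
        rw [this] at h; injection h with h'; rw [← h']
        exact Set.subsingleton_singleton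
  · ext w
    constructor
    · rintro ⟨q₀, hq₀, h⟩
      have : q₀ = .q0 := by simpa [Mabc] using hq₀
      subst this
      exact Mabc_sound w.length w le_rfl h
    · rintro ⟨m, rfl⟩
      exact ⟨.q0, by simp [Mabc], Mabc_complete m⟩
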